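/- arXiv:0809.2858 — 2 statements merged into one kernel-verified Lean document; each statement's English description precedes it below -/
import Mathlib

section
/- Let G1 and G2 be disjoint connected 3-leaf powers and let H be the join composition adding all edges between S1 ⊆ V(G1) and S2 ⊆ V(G2). If there exists a vertex v of G1 with S1 = N(v) ∪ {v}, and S2 = V(G2) with G2 a clique, then H is a 3-leaf power. -/
/-! In `H`, every vertex of `G2` has the same closed neighbourhood as `v`, namely `N[v] ∪ V(G2)`:
`{v} ∪ V(G2)` is a class of true twins. The bull, the dart, the gem and the chordless cycles of
length at least four have no true twins, so an induced copy of one of them in `H` meets this class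
at most once, and sending that vertex to `v` gives an induced copy in `G1`. -/

open SimpleGraph

/-- The bull: a triangle `0,1,2` with pendant vertices `3` (on `1`) and `4` (on `2`). -/
def bull : SimpleGraph (Fin 5) :=
  SimpleGraph.fromRel (fun a b => (a, b) ∈ ([(0,1),(0,2),(1,2),(1,3),(2,4)] : List (Fin 5 × Fin 5)))

/-- The dart: a diamond `0,1,2,3` (missing edge `(0,1)`) plus a pendant vertex `4`
adjacent to the degree-3 vertex `2`. -/
def dart : SimpleGraph (Fin 5) :=
  SimpleGraph.fromRel (fun a b => (a, b) ∈ ([(0,2),(0,3),(1,2),(1,3),(2,3),(2,4)] : List (Fin 5 × Fin 5)))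

/-- The gem: a path `0-1-2-3` plus a dominating vertex `4`. -/
def gem : SimpleGraph (Fin 5) :=
  SimpleGraph.fromRel (fun a b => (a, b) ∈ ([(0,1),(1,2),(2,3),(0,4),(1,4),(2,4),(3,4)] : List (Fin 5 × Fin 5)))

/-- A graph is a 3-leaf power iff it is {bull, dart, gem, chordless `C≥4`}-free. -/
def Is3LeafPower {V : Type*} (H : SimpleGraph V) : Prop :=
  IsEmpty (bull ↪g H) ∧ IsEmpty (dart ↪g H) ∧ IsEmpty (gem ↪g H) ∧
    ∀ n, 4 ≤ n → IsEmpty (SimpleGraph.cycleGraph n ↪g H)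

/-- The join composition `(G1,S1) ⊗ (G2,S2)`: the disjoint union of `G1` and `G2`
together with all edges between `S1` and `S2`. -/
def joinComp {V1 V2 : Type*} (G1 : SimpleGraph V1) (G2 : SimpleGraph V2)
    (S1 : Set V1) (S2 : Set V2) : SimpleGraph (V1 ⊕ V2) :=
  SimpleGraph.fromRel (fun a b =>
    (∃ x y, a = .inl x ∧ b = .inl y ∧ G1.Adj x y) ∨
    (∃ x y, a = .inr x ∧ b = .inr y ∧ G2.Adj x y) ∨
    (∃ x y, a = .inl x ∧ b = .inr y ∧ x ∈ S1 ∧ y ∈ S2))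

namespace SimpleGraph

variable {U V W : Type*}

def closedNeighborSet (G : SimpleGraph V) (v : V) : Set V := insert v (G.neighborSet v)

@[simp]
theorem mem_closedNeighborSet {G : SimpleGraph V} {v w : V} :
    w ∈ G.closedNeighborSet v ↔ w = v ∨ G.Adj v w := Iff.rfl

theorem mem_closedNeighborSet_comm {G : SimpleGraph V} {v w : V} :
    w ∈ G.closedNeighborSet v ↔ v ∈ G.closedNeighborSet w := by
  simp only [mem_closedNeighborSet, eq_comm, G.adj_comm]

theorem adj_iff_mem_closedNeighborSet {G : SimpleGraph V} {v w : V} (h : v ≠ w) :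
    G.Adj v w ↔ w ∈ G.closedNeighborSet v := by
  simp [h.symm]

theorem closedNeighborSet_injective_of_adj {G : SimpleGraph V}
    (h : ∀ a b, G.Adj a b → ∃ z, ¬(z = a ∨ G.Adj a z ↔ z = b ∨ G.Adj b z)) :
    Function.Injective G.closedNeighborSet := by
  intro a b hab
  by_contra hne
  have hb : b ∈ G.closedNeighborSet a := hab ▸ Set.mem_insert b _
  obtain ⟨z, hz⟩ := h a b ((mem_closedNeighborSet.mp hb).resolve_left (Ne.symm hne))
  exact hz (Set.ext_iff.mp hab z)

open Fin.NatCast Fin.CommRing in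
theorem closedNeighborSet_injective_cycleGraph {n : ℕ} (hn : 4 ≤ n) :
    Function.Injective (cycleGraph n).closedNeighborSet := by
  obtain ⟨m, rfl⟩ : ∃ m, n = m + 2 := ⟨n - 2, by omega⟩
  have cast_ne_zero : ∀ k : ℕ, 0 < k → k < m + 2 → (k : Fin (m + 2)) ≠ 0 := fun k hk0 hk h =>
    absurd (Nat.le_of_dvd hk0 (Fin.natCast_eq_zero.mp h)) (by omega)
  -- `a + 2` is a neighbour of `a + 1` but not of `a`.
  have distinguish : ∀ a b : Fin (m + 2), b - a = 1 →
      ∃ z, ¬(z = a ∨ (cycleGraph (m + 2)).Adj a z ↔ z = b ∨ (cycleGraph (m + 2)).Adj b z) := by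
    intro a b hab
    obtain rfl : b = a + 1 := by linear_combination hab
    refine ⟨a + 2, fun h => ?_⟩
    rcases h.mpr (Or.inr (Or.inr (by ring))) with h | h | h
    · exact cast_ne_zero 2 (by omega) (by omega) (by push_cast; linear_combination h)
    · exact cast_ne_zero 3 (by omega) (by omega) (by push_cast; linear_combination -h)
    · exact cast_ne_zero 1 (by omega) (by omega) (by push_cast; linear_combination h)
  refine closedNeighborSet_injective_of_adj fun a b hab => ?_
  rcases cycleGraph_adj.mp hab with h | h
  · obtain ⟨z, hz⟩ := distinguish b a h
    exact ⟨z, fun h' => hz h'.symm⟩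
  · exact distinguish a b h

namespace Embedding

variable {F : SimpleGraph U} {G : SimpleGraph V} {H : SimpleGraph W}

theorem preimage_closedNeighborSet (f : G ↪g H) (v : V) :
    f ⁻¹' H.closedNeighborSet (f v) = G.closedNeighborSet v := by
  ext w
  simp [f.injective.eq_iff, eq_comm]

theorem isEmpty_of_closedNeighborSet_retraction (φ : G ↪g H) (r : W → V)
    (hr : ∀ w, H.closedNeighborSet (φ (r w)) = H.closedNeighborSet w)
    (hF : Function.Injective F.closedNeighborSet) (hG : IsEmpty (F ↪g G)) : IsEmpty (F ↪g H) := by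
  refine ⟨fun f => ?_⟩
  have twin (x : U) : H.closedNeighborSet (φ (r (f x))) = H.closedNeighborSet (f x) := hr (f x)
  have hinj : Function.Injective fun x => r (f x) := fun a b (hab : r (f a) = r (f b)) => hF <| by
    rw [← f.preimage_closedNeighborSet, ← f.preimage_closedNeighborSet, ← twin, ← twin, hab]
  refine hG.false ⟨⟨_, hinj⟩, fun {a b} => ?_⟩
  rcases eq_or_ne a b with rfl | hab
  · simp
  change G.Adj (r (f a)) (r (f b)) ↔ F.Adj a b
  rw [← φ.map_adj_iff, adj_iff_mem_closedNeighborSet (φ.injective.ne (hinj.ne hab)), twin,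
    mem_closedNeighborSet_comm, twin, mem_closedNeighborSet_comm,
    ← adj_iff_mem_closedNeighborSet (f.injective.ne hab), f.map_adj_iff]

end Embedding

end SimpleGraph

instance : DecidableRel bull.Adj := fun _ _ => decidable_of_iff _ (fromRel_adj _ _ _).symm

instance : DecidableRel dart.Adj := fun _ _ => decidable_of_iff _ (fromRel_adj _ _ _).symm

instance : DecidableRel gem.Adj := fun _ _ => decidable_of_iff _ (fromRel_adj _ _ _).symm

theorem closedNeighborSet_injective_bull : Function.Injective bull.closedNeighborSet :=
  closedNeighborSet_injective_of_adj (by decide)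

theorem closedNeighborSet_injective_dart : Function.Injective dart.closedNeighborSet :=
  closedNeighborSet_injective_of_adj (by decide)

theorem closedNeighborSet_injective_gem : Function.Injective gem.closedNeighborSet :=
  closedNeighborSet_injective_of_adj (by decide)

theorem Is3LeafPower.of_closedNeighborSet_retraction {V W : Type*} {G : SimpleGraph V}
    {H : SimpleGraph W} (hG : Is3LeafPower G) (φ : G ↪g H) (r : W → V)
    (hr : ∀ w, H.closedNeighborSet (φ (r w)) = H.closedNeighborSet w) : Is3LeafPower H := by
  obtain ⟨hbull, hdart, hgem, hcycle⟩ := hG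
  exact ⟨φ.isEmpty_of_closedNeighborSet_retraction r hr closedNeighborSet_injective_bull hbull,
    φ.isEmpty_of_closedNeighborSet_retraction r hr closedNeighborSet_injective_dart hdart,
    φ.isEmpty_of_closedNeighborSet_retraction r hr closedNeighborSet_injective_gem hgem,
    fun n hn => φ.isEmpty_of_closedNeighborSet_retraction r hr
      (closedNeighborSet_injective_cycleGraph hn) (hcycle n hn)⟩

section joinComp

variable {V1 V2 : Type*} {G1 : SimpleGraph V1} {G2 : SimpleGraph V2} {S1 : Set V1} {S2 : Set V2}

@[simp]
theorem joinComp_adj_inl_inl {x y : V1} :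
    (joinComp G1 G2 S1 S2).Adj (.inl x) (.inl y) ↔ G1.Adj x y := by
  simpa [joinComp, G1.adj_comm y x] using fun h : G1.Adj x y => h.ne

@[simp]
theorem joinComp_adj_inr_inr {x y : V2} :
    (joinComp G1 G2 S1 S2).Adj (.inr x) (.inr y) ↔ G2.Adj x y := by
  simpa [joinComp, G2.adj_comm y x] using fun h : G2.Adj x y => h.ne

@[simp]
theorem joinComp_adj_inl_inr {x : V1} {y : V2} :
    (joinComp G1 G2 S1 S2).Adj (.inl x) (.inr y) ↔ x ∈ S1 ∧ y ∈ S2 := by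
  simp [joinComp]

@[simp]
theorem joinComp_adj_inr_inl {x : V1} {y : V2} :
    (joinComp G1 G2 S1 S2).Adj (.inr y) (.inl x) ↔ x ∈ S1 ∧ y ∈ S2 := by
  rw [adj_comm, joinComp_adj_inl_inr]

def joinCompInl : G1 ↪g joinComp G1 G2 S1 S2 := ⟨.inl, joinComp_adj_inl_inl⟩

theorem closedNeighborSet_joinComp_inr (v : V1) (y : V2) :
    (joinComp G1 ⊤ (G1.closedNeighborSet v) Set.univ).closedNeighborSet (.inr y) =
      (joinComp G1 ⊤ (G1.closedNeighborSet v) Set.univ).closedNeighborSet (.inl v) := by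
  ext (x | y')
  · simp [G1.adj_comm v x]
  · simp [eq_comm, em]

end joinComp

theorem joinComp_threeLeafPower_of_closedNbhd_general {V1 V2 : Type*}
    (G1 : SimpleGraph V1) (G2 : SimpleGraph V2)
    (hL1 : Is3LeafPower G1)
    (S1 : Set V1) (S2 : Set V2)
    (hv : ∃ v : V1, S1 = {x | G1.Adj v x} ∪ {v})
    (hS2univ : S2 = Set.univ) (hcl2 : G2.IsClique Set.univ) :
    Is3LeafPower (joinComp G1 G2 S1 S2) := by
  obtain ⟨v, rfl⟩ := hv
  obtain rfl := isClique_univ.mp hcl2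
  subst hS2univ
  rw [Set.union_singleton]
  refine hL1.of_closedNeighborSet_retraction joinCompInl (Sum.elim id fun _ => v) ?_
  rintro (x | y)
  · rfl
  · exact (closedNeighborSet_joinComp_inr v y).symm

theorem joinComp_threeLeafPower_of_closedNbhd {V1 V2 : Type*}
    (G1 : SimpleGraph V1) (G2 : SimpleGraph V2)
    (h1 : G1.Connected) (h2 : G2.Connected)
    (hL1 : Is3LeafPower G1) (hL2 : Is3LeafPower G2)
    (S1 : Set V1) (S2 : Set V2) (hS1 : S1.Nonempty) (hS2 : S2.Nonempty)
    (hv : ∃ v : V1, S1 = {x | G1.Adj v x} ∪ {v})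
    (hS2univ : S2 = Set.univ) (hcl2 : G2.IsClique Set.univ) :
    Is3LeafPower (joinComp G1 G2 S1 S2) :=
  joinComp_threeLeafPower_of_closedNbhd_general G1 G2 hL1 S1 S2 hv hS2univ hcl2
end

section
/- Let G1, G2 be disjoint connected 3-leaf powers and H = (G1,S1) ⊗ (G2,S2) their join composition. If H is a 3-leaf power, then both S1 and S2 are cliques, or there is a vertex v in one of the graphs, say G1, with S1 = N(v) ∪ {v} and S2 = V(G2) a clique. -/
open SimpleGraph

/-!
If `S₁` is not a clique, take non-adjacent `a, b ∈ S₁` at minimal distance in `G₁`. A shortest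
`a`–`b` path whose interior avoids `S₁` closes up, through any `s ∈ S₂`, to a chordless cycle of
length at least four; so minimality produces a common neighbour `c ∈ S₁` of `a` and `b`.
Then two non-adjacent vertices of `S₂` would form a `C₄` with `a` and `b`, an edge of `G₂` leaving
`S₂` would form a dart with `a, b, c`, and a vertex of `S₁` outside the closed neighbourhood of `c`
(or of the closed neighbourhood of `c` outside `S₁`) would form a `C₄`, a gem or a dart with
`a, b, c` and some `s ∈ S₂`. If `S₁` is a clique and `S₂` is not, exchange the two sides.
-/

namespace SimpleGraph

variable {α V : Type*} {A : SimpleGraph α} {H : SimpleGraph V}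

lemma nonempty_embedding_of_adj_of_not_adj (f : α → V)
    (hadj : ∀ i j, A.Adj i j → H.Adj (f i) (f j))
    (hnadj : ∀ i j, i ≠ j → ¬A.Adj i j → f i ≠ f j ∧ ¬H.Adj (f i) (f j)) :
    Nonempty (A ↪g H) := by
  have hinj : f.Injective := fun i j hfij => by
    by_contra hij
    by_cases hA : A.Adj i j
    · exact (hadj i j hA).ne hfij
    · exact (hnadj i j hij hA).1 hfij
  refine ⟨⟨⟨f, hinj⟩, fun {i j} => ⟨fun hH => ?_, hadj i j⟩⟩⟩
  by_contra hA
  exact (hnadj i j (fun hij => hH.ne (congrArg f hij)) hA).2 hH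

lemma nonempty_gem_embedding (v₀ v₁ v₂ v₃ v₄ : V)
    (h01 : H.Adj v₀ v₁) (h12 : H.Adj v₁ v₂) (h23 : H.Adj v₂ v₃) (h04 : H.Adj v₀ v₄)
    (h14 : H.Adj v₁ v₄) (h24 : H.Adj v₂ v₄) (h34 : H.Adj v₃ v₄)
    (n02 : ¬H.Adj v₀ v₂) (n03 : ¬H.Adj v₀ v₃) (n13 : ¬H.Adj v₁ v₃) :
    Nonempty (gem ↪g H) := by
  have d02 : v₀ ≠ v₂ := by rintro rfl; exact n03 h23
  have d03 : v₀ ≠ v₃ := by rintro rfl; exact n02 h23.symm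
  have d13 : v₁ ≠ v₃ := by rintro rfl; exact n03 h01
  refine nonempty_embedding_of_adj_of_not_adj ![v₀, v₁, v₂, v₃, v₄] ?_ ?_ <;> intro i j <;>
    fin_cases i <;> fin_cases j <;> simp [gem, adj_comm, eq_comm, *]

lemma nonempty_dart_embedding (v₀ v₁ v₂ v₃ v₄ : V)
    (h02 : H.Adj v₀ v₂) (h03 : H.Adj v₀ v₃) (h12 : H.Adj v₁ v₂) (h13 : H.Adj v₁ v₃)
    (h23 : H.Adj v₂ v₃) (h24 : H.Adj v₂ v₄)
    (n01 : ¬H.Adj v₀ v₁) (n04 : ¬H.Adj v₀ v₄) (n14 : ¬H.Adj v₁ v₄) (n34 : ¬H.Adj v₃ v₄)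
    (d01 : v₀ ≠ v₁) : Nonempty (dart ↪g H) := by
  have d04 : v₀ ≠ v₄ := by rintro rfl; exact n34 h03.symm
  have d14 : v₁ ≠ v₄ := by rintro rfl; exact n34 h13.symm
  have d34 : v₃ ≠ v₄ := by rintro rfl; exact n04 h03
  refine nonempty_embedding_of_adj_of_not_adj ![v₀, v₁, v₂, v₃, v₄] ?_ ?_ <;> intro i j <;>
    fin_cases i <;> fin_cases j <;> simp [dart, adj_comm, eq_comm, *]

lemma nonempty_cycleGraph_four_embedding (v₀ v₁ v₂ v₃ : V)
    (h01 : H.Adj v₀ v₁) (h12 : H.Adj v₁ v₂) (h23 : H.Adj v₂ v₃) (h03 : H.Adj v₀ v₃)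
    (n02 : ¬H.Adj v₀ v₂) (n13 : ¬H.Adj v₁ v₃) (d02 : v₀ ≠ v₂) (d13 : v₁ ≠ v₃) :
    Nonempty (cycleGraph 4 ↪g H) := by
  refine nonempty_embedding_of_adj_of_not_adj ![v₀, v₁, v₂, v₃] ?_ ?_ <;> intro i j <;>
    fin_cases i <;> fin_cases j <;> simp +decide [adj_comm, eq_comm, *]

lemma cycleGraph_adj_iff_val {n : ℕ} {u v : Fin (n + 2)} :
    (cycleGraph (n + 2)).Adj u v ↔ u.val + 1 = v.val ∨ v.val + 1 = u.val ∨
      (u.val = 0 ∧ v.val = n + 1) ∨ (v.val = 0 ∧ u.val = n + 1) := by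
  have hsub (a b : Fin (n + 2)) :
      (a - b).val = 1 ↔ a.val = b.val + 1 ∨ (a.val = 0 ∧ b.val = n + 1) := by
    rcases le_or_gt b a with h | h
    · rw [Fin.sub_val_of_le h]; omega
    · rw [Fin.coe_sub_iff_lt.mpr h]; omega
  rw [cycleGraph_adj', hsub, hsub]
  omega

lemma nonempty_cycleGraph_embedding_of_path {d : ℕ} (x : ℕ → V) (z : V)
    (hx : ∀ i ≤ d, ∀ j ≤ d, (H.Adj (x i) (x j) ↔ i + 1 = j ∨ j + 1 = i))
    (hinj : ∀ i ≤ d, ∀ j ≤ d, x i = x j → i = j)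
    (hz : ∀ i ≤ d, (H.Adj (x i) z ↔ i = 0 ∨ i = d)) (hzx : ∀ i ≤ d, x i ≠ z) :
    Nonempty (cycleGraph (d + 2) ↪g H) := by
  let f : Fin (d + 2) → V := fun k => if k.val ≤ d then x k else z
  have hf : f.Injective := by
    intro i j hij
    ext
    by_cases hi : i.val ≤ d <;> by_cases hj : j.val ≤ d <;>
      simp only [f, hi, hj, if_true, if_false] at hij
    · exact hinj _ hi _ hj hij
    · exact absurd hij (hzx _ hi)
    · exact absurd hij.symm (hzx _ hj)
    · omega
  refine ⟨⟨⟨f, hf⟩, fun {i j} => ?_⟩⟩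
  simp only [Function.Embedding.coeFn_mk, cycleGraph_adj_iff_val]
  by_cases hi : i.val ≤ d <;> by_cases hj : j.val ≤ d <;> simp only [f, hi, hj, if_true, if_false]
  · rw [hx _ hi _ hj]; omega
  · rw [hz _ hi]; omega
  · rw [adj_comm, hz _ hj]; omega
  · simp only [SimpleGraph.irrefl, false_iff]; omega

structure IsInducedP3In (G : SimpleGraph V) (S : Set V) (a c b : V) : Prop where
  left_mem : a ∈ S
  center_mem : c ∈ S
  right_mem : b ∈ S
  ne : a ≠ b
  not_adj : ¬G.Adj a b
  adj_left : G.Adj a c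
  adj_right : G.Adj b c

end SimpleGraph

namespace SimpleGraph.Walk

variable {V : Type*} {G : SimpleGraph V} {u v : V} {p : G.Walk u v}

lemma dist_getVert_getVert_of_length_eq_dist (hp : p.length = G.dist u v) {i j : ℕ}
    (hij : i ≤ j) (hj : j ≤ p.length) : G.dist (p.getVert i) (p.getVert j) = j - i := by
  have hsub : ((p.drop i).take (j - i)).IsSubwalk p :=
    (isSubwalk_take _ _).trans (isSubwalk_drop _ _)
  have := length_eq_dist_of_subwalk hp hsub
  rw [take_length, drop_length, drop_getVert, Nat.add_sub_cancel' hij] at this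
  omega

lemma adj_getVert_getVert_iff_of_length_eq_dist (hp : p.length = G.dist u v) {i j : ℕ}
    (hi : i ≤ p.length) (hj : j ≤ p.length) :
    G.Adj (p.getVert i) (p.getVert j) ↔ i + 1 = j ∨ j + 1 = i := by
  rw [← dist_eq_one_iff_adj]
  rcases le_total i j with h | h
  · rw [dist_getVert_getVert_of_length_eq_dist hp h hj]; omega
  · rw [dist_comm, dist_getVert_getVert_of_length_eq_dist hp h hi]; omega

end SimpleGraph.Walk

section JoinComp

variable {V₁ V₂ : Type*} {G₁ : SimpleGraph V₁} {G₂ : SimpleGraph V₂} {S₁ : Set V₁} {S₂ : Set V₂}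

@[simp]
lemma joinComp_adj_inl_inl_s7 {x y : V₁} :
    (joinComp G₁ G₂ S₁ S₂).Adj (.inl x) (.inl y) ↔ G₁.Adj x y := by
  simpa [joinComp, adj_comm] using fun h : G₁.Adj x y => h.ne

@[simp]
lemma joinComp_adj_inr_inr_s7 {x y : V₂} :
    (joinComp G₁ G₂ S₁ S₂).Adj (.inr x) (.inr y) ↔ G₂.Adj x y := by
  simpa [joinComp, adj_comm] using fun h : G₂.Adj x y => h.ne

@[simp]
lemma joinComp_adj_inl_inr_s7 {x : V₁} {y : V₂} :
    (joinComp G₁ G₂ S₁ S₂).Adj (.inl x) (.inr y) ↔ x ∈ S₁ ∧ y ∈ S₂ := by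
  simp [joinComp]

@[simp]
lemma joinComp_adj_inr_inl_s7 {x : V₂} {y : V₁} :
    (joinComp G₁ G₂ S₁ S₂).Adj (.inr x) (.inl y) ↔ y ∈ S₁ ∧ x ∈ S₂ := by
  simp [joinComp]

def joinCompComm : joinComp G₂ G₁ S₂ S₁ ≃g joinComp G₁ G₂ S₁ S₂ where
  toEquiv := Equiv.sumComm V₂ V₁
  map_rel_iff' := by rintro (x | x) (y | y) <;> simp [and_comm]

end JoinComp

namespace Is3LeafPower

section Forbidden

variable {V W : Type*} {A : SimpleGraph V} {H : SimpleGraph W}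

lemma comap (hH : Is3LeafPower H) (e : A ↪g H) : Is3LeafPower A :=
  ⟨⟨fun f => hH.1.false (e.comp f)⟩, ⟨fun f => hH.2.1.false (e.comp f)⟩,
    ⟨fun f => hH.2.2.1.false (e.comp f)⟩, fun n hn => ⟨fun f => (hH.2.2.2 n hn).false (e.comp f)⟩⟩

lemma dart_free (hH : Is3LeafPower H) : ¬Nonempty (dart ↪g H) :=
  not_nonempty_iff.2 hH.2.1

lemma gem_free (hH : Is3LeafPower H) : ¬Nonempty (gem ↪g H) :=
  not_nonempty_iff.2 hH.2.2.1

lemma cycleGraph_free (hH : Is3LeafPower H) {n : ℕ} (hn : 4 ≤ n) :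
    ¬Nonempty (cycleGraph n ↪g H) :=
  not_nonempty_iff.2 (hH.2.2.2 n hn)

end Forbidden

variable {V₁ V₂ : Type*} {G₁ : SimpleGraph V₁} {G₂ : SimpleGraph V₂} {S₁ : Set V₁} {S₂ : Set V₂}

lemma isClique_right_of_joinComp (hH : Is3LeafPower (joinComp G₁ G₂ S₁ S₂)) {a b : V₁}
    (ha : a ∈ S₁) (hb : b ∈ S₁) (hab : a ≠ b) (hnab : ¬G₁.Adj a b) : G₂.IsClique S₂ := by
  intro s hs t ht hst
  by_contra hnst
  apply hH.cycleGraph_free le_rfl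
  apply nonempty_cycleGraph_four_embedding (.inl a) (.inr s) (.inl b) (.inr t) <;> simp [*]

lemma eq_univ_right_of_joinComp (hH : Is3LeafPower (joinComp G₁ G₂ S₁ S₂))
    (h₂ : G₂.Connected) (hS₂ : S₂.Nonempty) {a c b : V₁} (hP : G₁.IsInducedP3In S₁ a c b) :
    S₂ = Set.univ := by
  obtain ⟨ha, hc, hb, hab, hnab, hac, hbc⟩ := hP
  obtain ⟨s, hs⟩ := hS₂
  refine Set.eq_univ_of_forall fun t => by_contra fun ht => ?_
  obtain ⟨⟨⟨s', t'⟩, hst'⟩, -, hs', ht'⟩ :=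
    (h₂.preconnected s t).some.exists_boundary_dart S₂ hs ht
  apply hH.dart_free
  apply nonempty_dart_embedding (.inl a) (.inl b) (.inr s') (.inl c) (.inr t') <;> simp_all

lemma adj_of_mem_left_of_joinComp (hH : Is3LeafPower (joinComp G₁ G₂ S₁ S₂)) {s : V₂}
    (hs : s ∈ S₂) {a c b : V₁} (hP : G₁.IsInducedP3In S₁ a c b) {w : V₁} (hw : w ∈ S₁)
    (hwc : w ≠ c) : G₁.Adj c w := by
  obtain ⟨ha, hc, hb, hab, hnab, hac, hbc⟩ := hP
  by_contra hcw
  have hwa : w ≠ a := by rintro rfl; exact hcw hac.symm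
  have hwb : w ≠ b := by rintro rfl; exact hcw hbc.symm
  by_cases hwa' : G₁.Adj w a <;> by_cases hwb' : G₁.Adj w b
  · apply hH.cycleGraph_free le_rfl
    apply nonempty_cycleGraph_four_embedding (.inl w) (.inl a) (.inl c) (.inl b) <;>
      simp_all [adj_comm]
  · apply hH.gem_free
    apply nonempty_gem_embedding (.inl w) (.inl a) (.inl c) (.inl b) (.inr s) <;>
      simp_all [adj_comm]
  · apply hH.gem_free
    apply nonempty_gem_embedding (.inl w) (.inl b) (.inl c) (.inl a) (.inr s) <;>
      simp_all [adj_comm]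
  · apply hH.dart_free
    apply nonempty_dart_embedding (.inl a) (.inl b) (.inr s) (.inl c) (.inl w) <;>
      simp_all [adj_comm]

lemma mem_left_of_adj_of_joinComp (hH : Is3LeafPower (joinComp G₁ G₂ S₁ S₂)) {s : V₂}
    (hs : s ∈ S₂) {a c b : V₁} (hP : G₁.IsInducedP3In S₁ a c b) {w : V₁} (hcw : G₁.Adj c w) :
    w ∈ S₁ := by
  obtain ⟨ha, hc, hb, hab, hnab, hac, hbc⟩ := hP
  by_contra hw
  have hwa : w ≠ a := by rintro rfl; exact hw ha
  have hwb : w ≠ b := by rintro rfl; exact hw hb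
  by_cases hwa' : G₁.Adj w a <;> by_cases hwb' : G₁.Adj w b
  · apply hH.cycleGraph_free le_rfl
    apply nonempty_cycleGraph_four_embedding (.inl a) (.inl w) (.inl b) (.inr s) <;>
      simp_all [adj_comm]
  · apply hH.gem_free
    apply nonempty_gem_embedding (.inl w) (.inl a) (.inr s) (.inl b) (.inl c) <;>
      simp_all [adj_comm]
  · apply hH.gem_free
    apply nonempty_gem_embedding (.inl w) (.inl b) (.inr s) (.inl a) (.inl c) <;>
      simp_all [adj_comm]
  · apply hH.dart_free
    apply nonempty_dart_embedding (.inl a) (.inl b) (.inl c) (.inr s) (.inl w) <;>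
      simp_all [adj_comm]

lemma exists_interior_mem_left_of_joinComp (hH : Is3LeafPower (joinComp G₁ G₂ S₁ S₂))
    {s : V₂} (hs : s ∈ S₂) {a b : V₁} (ha : a ∈ S₁) (hb : b ∈ S₁) {p : G₁.Walk a b}
    (hp : p.length = G₁.dist a b) (h2 : 2 ≤ p.length) :
    ∃ i, 0 < i ∧ i < p.length ∧ p.getVert i ∈ S₁ := by
  by_contra! hint
  apply hH.cycleGraph_free (n := p.length + 2) (by omega)
  refine nonempty_cycleGraph_embedding_of_path (fun i => .inl (p.getVert i)) (.inr s)
    (fun i hi j hj => ?_) (fun i hi j hj h => ?_) (fun i hi => ?_) (fun i _ => Sum.inl_ne_inr)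
  · simpa using p.adj_getVert_getVert_iff_of_length_eq_dist hp hi hj
  · exact (p.isPath_of_length_eq_dist hp).getVert_injOn hi hj (Sum.inl_injective h)
  · simp only [joinComp_adj_inl_inr_s7, hs, and_true]
    constructor
    · intro hiS
      by_contra! h
      exact hint i (by omega) (by omega) hiS
    · rintro (rfl | rfl)
      · simpa using ha
      · simpa using hb

lemma exists_isInducedP3In_left_of_joinComp (hH : Is3LeafPower (joinComp G₁ G₂ S₁ S₂))
    (h₁ : G₁.Connected) (hS₂ : S₂.Nonempty) (hS₁ : ¬G₁.IsClique S₁) :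
    ∃ a c b, G₁.IsInducedP3In S₁ a c b := by
  obtain ⟨s, hs⟩ := hS₂
  suffices ∀ n, ∀ a ∈ S₁, ∀ b ∈ S₁, G₁.dist a b = n → 2 ≤ n → ∃ a c b, G₁.IsInducedP3In S₁ a c b by
    obtain ⟨a, ha, b, hb, hab, hnab⟩ : ∃ a ∈ S₁, ∃ b ∈ S₁, a ≠ b ∧ ¬G₁.Adj a b := by
      simpa [IsClique, Set.Pairwise] using hS₁
    exact this _ a ha b hb rfl (h₁.one_lt_dist_of_ne_of_not_adj hab hnab)
  intro n
  induction n using Nat.strong_induction_on with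
  | _ n ih =>
  intro a ha b hb hd hn
  obtain ⟨p, hp⟩ := h₁.exists_walk_length_eq_dist a b
  rw [hd] at hp
  have hdist {i j : ℕ} (hij : i ≤ j) (hj : j ≤ n) : G₁.dist (p.getVert i) (p.getVert j) = j - i :=
    p.dist_getVert_getVert_of_length_eq_dist (hp.trans hd.symm) hij (by omega)
  have hpb : p.getVert n = b := hp ▸ p.getVert_length
  obtain ⟨i, hi0, hin, hiS⟩ :=
    hH.exists_interior_mem_left_of_joinComp hs ha hb (hp.trans hd.symm) (by omega)
  by_cases hi : 2 ≤ i
  · exact ih i (by omega) a ha _ hiS (by simpa using hdist (Nat.zero_le i) (by omega)) hi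
  obtain rfl : i = 1 := by omega
  by_cases hn2 : n = 2
  · subst hn2
    refine ⟨a, p.getVert 1, b, ha, hiS, hb, ?_, ?_, ?_, ?_⟩
    · rintro rfl; simp at hd
    · rw [← dist_eq_one_iff_adj, hd]; omega
    · simpa using p.adj_getVert_succ (i := 0) (by omega)
    · simpa [hpb] using (p.adj_getVert_succ (i := 1) (by omega)).symm
  · refine ih (n - 1) (by omega) _ hiS b hb ?_ (by omega)
    simpa [hpb] using hdist (i := 1) (j := n) (by omega) le_rfl

lemma eq_closedNbhd_of_not_isClique_of_joinComp (hH : Is3LeafPower (joinComp G₁ G₂ S₁ S₂))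
    (h₁ : G₁.Connected) (h₂ : G₂.Connected) (hS₂ : S₂.Nonempty) (hS₁ : ¬G₁.IsClique S₁) :
    (∃ v, S₁ = {x | G₁.Adj v x} ∪ {v}) ∧ S₂ = Set.univ ∧ G₂.IsClique Set.univ := by
  obtain ⟨a, c, b, hP⟩ := hH.exists_isInducedP3In_left_of_joinComp h₁ hS₂ hS₁
  obtain ⟨s, hs⟩ := hS₂
  have hS₂univ := hH.eq_univ_right_of_joinComp h₂ ⟨s, hs⟩ hP
  refine ⟨⟨c, Set.ext fun w => ⟨fun hw => ?_, ?_⟩⟩, hS₂univ,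
    hS₂univ ▸ hH.isClique_right_of_joinComp hP.left_mem hP.right_mem hP.ne hP.not_adj⟩
  · by_cases hwc : w = c
    · exact Or.inr hwc
    · exact Or.inl (hH.adj_of_mem_left_of_joinComp hs hP hw hwc)
  · rintro (hcw | rfl)
    · exact hH.mem_left_of_adj_of_joinComp hs hP hcw
    · exact hP.center_mem

end Is3LeafPower

theorem joinComp_threeLeafPower_necessary_general {V1 V2 : Type*}
    (G1 : SimpleGraph V1) (G2 : SimpleGraph V2)
    (h1 : G1.Connected) (h2 : G2.Connected)
    (S1 : Set V1) (S2 : Set V2) (hS1 : S1.Nonempty) (hS2 : S2.Nonempty)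
    (hH : Is3LeafPower (joinComp G1 G2 S1 S2)) :
    (G1.IsClique S1 ∧ G2.IsClique S2) ∨
    (∃ v : V1, S1 = {x | G1.Adj v x} ∪ {v} ∧ S2 = Set.univ ∧ G2.IsClique Set.univ) ∨
    (∃ v : V2, S2 = {x | G2.Adj v x} ∪ {v} ∧ S1 = Set.univ ∧ G1.IsClique Set.univ) := by
  by_cases hc1 : G1.IsClique S1
  · by_cases hc2 : G2.IsClique S2
    · exact Or.inl ⟨hc1, hc2⟩
    · obtain ⟨⟨v, hv⟩, hS1univ, hG1⟩ :=
        (hH.comap joinCompComm.toEmbedding).eq_closedNbhd_of_not_isClique_of_joinComp h2 h1 hS1 hc2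
      exact Or.inr (Or.inr ⟨v, hv, hS1univ, hG1⟩)
  · obtain ⟨⟨v, hv⟩, hS2univ, hG2⟩ :=
      hH.eq_closedNbhd_of_not_isClique_of_joinComp h1 h2 hS2 hc1
    exact Or.inr (Or.inl ⟨v, hv, hS2univ, hG2⟩)

theorem joinComp_threeLeafPower_necessary {V1 V2 : Type*}
    (G1 : SimpleGraph V1) (G2 : SimpleGraph V2)
    (h1 : G1.Connected) (h2 : G2.Connected)
    (hL1 : Is3LeafPower G1) (hL2 : Is3LeafPower G2)
    (S1 : Set V1) (S2 : Set V2) (hS1 : S1.Nonempty) (hS2 : S2.Nonempty)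
    (hH : Is3LeafPower (joinComp G1 G2 S1 S2)) :
    (G1.IsClique S1 ∧ G2.IsClique S2) ∨
    (∃ v : V1, S1 = {x | G1.Adj v x} ∪ {v} ∧ S2 = Set.univ ∧ G2.IsClique Set.univ) ∨
    (∃ v : V2, S2 = {x | G2.Adj v x} ∪ {v} ∧ S1 = Set.univ ∧ G1.IsClique Set.univ) :=
  joinComp_threeLeafPower_necessary_general G1 G2 h1 h2 S1 S2 hS1 hS2 hH
end
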